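/- arXiv:1901.10670 — 2 statements merged into one kernel-verified Lean document; each statement's English description precedes it below -/
import Mathlib

section
/- Let (d_i)_{i≥1} and (ρ_i)_{i≥1} be sequences of positive reals with 0 < ρ_i ≤ d_i for all i ≥ 1 and inf_{i≥1} d_i > 0, let d_0 > 0, and define F(x) := (1/(x+d_0))·∑_{i=1}^∞ i·ρ_i·∏_{j=1}^i x/(x+d_j) for x ≥ 0. If d_i/(i·ρ_i) → 0 as i → ∞, then F(x) → ∞ as x → ∞, and consequently for every c > 0 there exists x > 0 with F(x) = c. -/
/-!
Write `P_n(x) = ∏_{j ≤ n} x / (x + d_j)`. Since `d_j ≥ δ := inf d_j > 0`, we have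
`P_n(x) ≤ (x / (x + δ))^n`, which dominates the series by `b (n + 1) (b / (b + δ))^n` on `[0, b]`;
hence `F` is continuous on `[0, ∞)`, and `F 0 = 0`. The identity
`d_{n+1} P_{n+1} = x (P_n - P_{n+1})` telescopes to `∑_{n ≥ N} d_{n+1} P_{n+1}(x) = x P_N(x)`.
Once `c d_n ≤ n ρ_n` for all `n > N`, this gives `F(x) ≥ c · x / (x + d₀) · P_N(x)`, whose limit
as `x → ∞` is `c`; so `F → ∞`, and the intermediate value theorem on `[0, ∞)` gives every
positive value.
-/

open Filter Topology Set

theorem tendsto_div_add_const_atTop (c : ℝ) :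
    Tendsto (fun x : ℝ => x / (x + c)) atTop (𝓝 1) := by
  have h : Tendsto (fun x : ℝ => 1 - c / (x + c)) atTop (𝓝 (1 - 0)) :=
    tendsto_const_nhds.sub <|
      tendsto_const_nhds.div_atTop (tendsto_atTop_add_const_right _ c tendsto_id)
  rw [sub_zero] at h
  refine h.congr' ?_
  filter_upwards [eventually_gt_atTop (-c)] with x hx
  field_simp [show x + c ≠ 0 by linarith]
  ring

theorem hasSum_sub_succ_of_antitone {f : ℕ → ℝ} (hf : Antitone f)
    (h : Tendsto f atTop (𝓝 0)) : HasSum (fun n => f n - f (n + 1)) (f 0) := by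
  rw [hasSum_iff_tendsto_nat_of_nonneg (fun n => sub_nonneg.2 (hf n.le_succ))]
  simp_rw [Finset.sum_range_sub']
  simpa using tendsto_const_nhds.sub h

theorem summable_succ_mul_geometric {r : ℝ} (hr0 : 0 ≤ r) (hr1 : r < 1) :
    Summable (fun i : ℕ => ((i : ℝ) + 1) * r ^ i) := by
  have hr : ‖r‖ < 1 := by rwa [Real.norm_of_nonneg hr0]
  refine ((summable_pow_mul_geometric_of_norm_lt_one 1 hr).add
    (summable_geometric_of_norm_lt_one hr)).congr fun i => ?_
  ring

theorem ciInf_succ_le_of_pos {d : ℕ → ℝ} (hz : 0 < ⨅ i, d (i + 1)) {j : ℕ} (hj : 1 ≤ j) :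
    ⨅ i, d (i + 1) ≤ d j := by
  have hbdd : BddBelow (range fun i => d (i + 1)) := by
    by_contra hb
    rw [Real.iInf_of_not_bddBelow hb] at hz
    exact hz.false
  obtain ⟨k, rfl⟩ : ∃ k, j = k + 1 := ⟨j - 1, by omega⟩
  exact ciInf_le hbdd k

noncomputable section

def equilibriumProd (d : ℕ → ℝ) (x : ℝ) (n : ℕ) : ℝ :=
  ∏ j ∈ Finset.Icc 1 n, x / (x + d j)

def equilibriumTerm (ρ d : ℕ → ℝ) (x : ℝ) (i : ℕ) : ℝ :=
  ((i + 1 : ℕ) : ℝ) * ρ (i + 1) * equilibriumProd d x (i + 1)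

def equilibriumFun (d₀ : ℝ) (ρ d : ℕ → ℝ) (x : ℝ) : ℝ :=
  1 / (x + d₀) * ∑' i, equilibriumTerm ρ d x i

variable {ρ d : ℕ → ℝ} {x δ : ℝ}

theorem equilibriumProd_succ (n : ℕ) :
    equilibriumProd d x (n + 1) = equilibriumProd d x n * (x / (x + d (n + 1))) :=
  Finset.prod_Icc_succ_top (by omega) _

theorem equilibriumProd_zero_left (n : ℕ) : equilibriumProd d 0 (n + 1) = 0 := by
  simp [equilibriumProd_succ]

theorem mul_equilibriumProd_succ {n : ℕ} (hx : x + d (n + 1) ≠ 0) :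
    d (n + 1) * equilibriumProd d x (n + 1) =
      x * (equilibriumProd d x n - equilibriumProd d x (n + 1)) := by
  rw [equilibriumProd_succ]
  field_simp
  ring

theorem tendsto_equilibriumProd_atTop (d : ℕ → ℝ) (n : ℕ) :
    Tendsto (fun x => equilibriumProd d x n) atTop (𝓝 1) := by
  simpa only [Finset.prod_const_one, equilibriumProd] using
    tendsto_finsetProd (Finset.Icc 1 n) fun j _ => tendsto_div_add_const_atTop (d j)

theorem equilibriumProd_nonneg (hx : 0 ≤ x) (hd : ∀ j, 1 ≤ j → 0 ≤ d j) (n : ℕ) :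
    0 ≤ equilibriumProd d x n :=
  Finset.prod_nonneg fun j hj => div_nonneg hx (add_nonneg hx (hd j (Finset.mem_Icc.1 hj).1))

theorem equilibriumProd_antitone (hx : 0 ≤ x) (hd : ∀ j, 1 ≤ j → 0 ≤ d j) :
    Antitone (equilibriumProd d x) := by
  refine antitone_nat_of_succ_le fun n => ?_
  rw [equilibriumProd_succ]
  refine mul_le_of_le_one_right (equilibriumProd_nonneg hx hd n) ?_
  exact div_le_one_of_le₀ (le_add_of_nonneg_right (hd _ n.succ_pos))
    (add_nonneg hx (hd _ n.succ_pos))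

theorem equilibriumProd_le_pow (hx : 0 ≤ x) (hδ : 0 < δ) (hd : ∀ j, 1 ≤ j → δ ≤ d j) (n : ℕ) :
    equilibriumProd d x n ≤ (x / (x + δ)) ^ n := by
  have hdn : ∀ j ∈ Finset.Icc 1 n, δ ≤ d j := fun j hj => hd j (Finset.mem_Icc.1 hj).1
  calc equilibriumProd d x n ≤ ∏ _j ∈ Finset.Icc 1 n, x / (x + δ) :=
        Finset.prod_le_prod (fun j hj => div_nonneg hx (by linarith [hdn j hj]))
          fun j hj => div_le_div_of_nonneg_left hx (by linarith) (by linarith [hdn j hj])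
    _ = (x / (x + δ)) ^ n := by rw [Finset.prod_const, Nat.card_Icc, Nat.add_sub_cancel]

theorem tendsto_equilibriumProd_zero (hx : 0 ≤ x) (hδ : 0 < δ) (hd : ∀ j, 1 ≤ j → δ ≤ d j) :
    Tendsto (equilibriumProd d x) atTop (𝓝 0) := by
  have hdnn : ∀ j, 1 ≤ j → 0 ≤ d j := fun j hj => hδ.le.trans (hd j hj)
  refine squeeze_zero (equilibriumProd_nonneg hx hdnn) (equilibriumProd_le_pow hx hδ hd)
    (tendsto_pow_atTop_nhds_zero_of_lt_one (by positivity) ?_)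
  rw [div_lt_one (by positivity)]
  linarith

theorem hasSum_mul_equilibriumProd (hx : 0 ≤ x) (hδ : 0 < δ) (hd : ∀ j, 1 ≤ j → δ ≤ d j)
    (N : ℕ) :
    HasSum (fun i => d (i + N + 1) * equilibriumProd d x (i + N + 1))
      (x * equilibriumProd d x N) := by
  have hdnn : ∀ j, 1 ≤ j → 0 ≤ d j := fun j hj => hδ.le.trans (hd j hj)
  have htel := hasSum_sub_succ_of_antitone
    ((equilibriumProd_antitone hx hdnn).comp_monotone (add_left_mono (a := N)))
    ((tendsto_equilibriumProd_zero hx hδ hd).comp (tendsto_add_atTop_nat N))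
  simp only [Function.comp_def, zero_add] at htel
  refine (htel.mul_left x).congr_fun fun i => ?_
  rw [mul_equilibriumProd_succ (by linarith [hd (i + N + 1) (by omega)])]
  ring_nf

theorem summable_equilibriumTerm_bound {b : ℝ} (hb : 0 ≤ b) (hδ : 0 < δ) :
    Summable (fun i : ℕ => b * (((i : ℝ) + 1) * (b / (b + δ)) ^ i)) :=
  (summable_succ_mul_geometric (by positivity)
    ((div_lt_one (by positivity)).2 (by linarith))).mul_left b

theorem equilibriumTerm_nonneg (hx : 0 ≤ x) (hρ : ∀ i, 1 ≤ i → 0 ≤ ρ i)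
    (hd : ∀ j, 1 ≤ j → 0 ≤ d j) (i : ℕ) : 0 ≤ equilibriumTerm ρ d x i :=
  mul_nonneg (mul_nonneg (Nat.cast_nonneg _) (hρ _ i.succ_pos))
    (equilibriumProd_nonneg hx hd _)

theorem equilibriumTerm_le {b : ℝ} (hx : 0 ≤ x) (hxb : x ≤ b) (hδ : 0 < δ)
    (hd : ∀ j, 1 ≤ j → δ ≤ d j) (hρd : ∀ i, 1 ≤ i → ρ i ≤ d i) (i : ℕ) :
    equilibriumTerm ρ d x i ≤ b * (((i : ℝ) + 1) * (b / (b + δ)) ^ i) := by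
  have hdnn : ∀ j, 1 ≤ j → 0 ≤ d j := fun j hj => hδ.le.trans (hd j hj)
  have hPi := equilibriumProd_nonneg hx hdnn i
  have hPi1 := equilibriumProd_nonneg hx hdnn (i + 1)
  have hratio : x / (x + δ) ≤ b / (b + δ) := by
    rw [div_le_div_iff₀ (by linarith) (by linarith)]
    nlinarith
  calc equilibriumTerm ρ d x i
      ≤ ((i : ℝ) + 1) * (d (i + 1) * equilibriumProd d x (i + 1)) := by
        rw [equilibriumTerm, mul_assoc]; push_cast
        gcongr
        exact hρd _ i.succ_pos
    _ = ((i : ℝ) + 1) * (x * (equilibriumProd d x i - equilibriumProd d x (i + 1))) := by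
        rw [mul_equilibriumProd_succ (by linarith [hd (i + 1) i.succ_pos])]
    _ ≤ ((i : ℝ) + 1) * (x * equilibriumProd d x i) := by gcongr; linarith
    _ ≤ ((i : ℝ) + 1) * (b * (b / (b + δ)) ^ i) := by
        gcongr
        · linarith
        · exact (equilibriumProd_le_pow hx hδ hd i).trans (by gcongr)
    _ = b * (((i : ℝ) + 1) * (b / (b + δ)) ^ i) := by ring

theorem summable_equilibriumTerm (hx : 0 ≤ x) (hρ : ∀ i, 1 ≤ i → 0 ≤ ρ i) (hδ : 0 < δ)
    (hd : ∀ j, 1 ≤ j → δ ≤ d j) (hρd : ∀ i, 1 ≤ i → ρ i ≤ d i) :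
    Summable (equilibriumTerm ρ d x) :=
  Summable.of_nonneg_of_le (equilibriumTerm_nonneg hx hρ fun j hj => hδ.le.trans (hd j hj))
    (equilibriumTerm_le hx le_rfl hδ hd hρd)
    (summable_equilibriumTerm_bound hx hδ)

theorem equilibriumFun_zero (d₀ : ℝ) (ρ d : ℕ → ℝ) : equilibriumFun d₀ ρ d 0 = 0 := by
  simp [equilibriumFun, equilibriumTerm, equilibriumProd_zero_left]

theorem continuousOn_equilibriumFun {d₀ : ℝ} (hd₀ : 0 < d₀) (hρ : ∀ i, 1 ≤ i → 0 ≤ ρ i)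
    (hδ : 0 < δ) (hd : ∀ j, 1 ≤ j → δ ≤ d j) (hρd : ∀ i, 1 ≤ i → ρ i ≤ d i) :
    ContinuousOn (equilibriumFun d₀ ρ d) (Ici 0) := by
  have hdnn : ∀ j, 1 ≤ j → 0 ≤ d j := fun j hj => hδ.le.trans (hd j hj)
  have hseries : ∀ b, 0 ≤ b →
      ContinuousOn (fun x => ∑' i, equilibriumTerm ρ d x i) (Icc 0 b) := by
    intro b hb
    refine continuousOn_tsum (fun i => ?_)
      (summable_equilibriumTerm_bound hb hδ) fun i x hx => ?_
    · refine continuousOn_const.mul <| continuousOn_finsetProd _ fun j hj => ?_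
      exact continuousOn_id.div (continuousOn_id.add continuousOn_const) fun x hx =>
        (add_pos_of_nonneg_of_pos hx.1 (hδ.trans_le (hd j (Finset.mem_Icc.1 hj).1))).ne'
    · rw [Real.norm_of_nonneg (equilibriumTerm_nonneg hx.1 hρ hdnn i)]
      exact equilibriumTerm_le hx.1 hx.2 hδ hd hρd i
  refine continuousOn_of_locally_continuousOn fun x hx => ⟨Iio (x + 1), isOpen_Iio, by simp, ?_⟩
  refine ContinuousOn.mono (s := Icc 0 (x + 1)) ?_ fun y hy => ⟨hy.1, le_of_lt hy.2⟩
  refine (continuousOn_const.div (continuousOn_id.add continuousOn_const) fun y hy => ?_).mul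
    (hseries (x + 1) (by linarith [mem_Ici.1 hx]))
  exact (add_pos_of_nonneg_of_pos hy.1 hd₀).ne'

theorem mul_equilibriumProd_le_tsum (hx : 0 ≤ x) (hρ : ∀ i, 1 ≤ i → 0 ≤ ρ i) (hδ : 0 < δ)
    (hd : ∀ j, 1 ≤ j → δ ≤ d j) (hρd : ∀ i, 1 ≤ i → ρ i ≤ d i) {c : ℝ} {N : ℕ}
    (hN : ∀ i, N < i → c * d i ≤ i * ρ i) :
    c * (x * equilibriumProd d x N) ≤ ∑' i, equilibriumTerm ρ d x i := by
  have hdnn : ∀ j, 1 ≤ j → 0 ≤ d j := fun j hj => hδ.le.trans (hd j hj)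
  have hS := summable_equilibriumTerm hx hρ hδ hd hρd
  calc c * (x * equilibriumProd d x N)
      ≤ ∑' i, equilibriumTerm ρ d x (i + N) := by
        refine hasSum_le (fun i => ?_) ((hasSum_mul_equilibriumProd hx hδ hd N).mul_left c)
          (hS.comp_injective (add_left_injective N)).hasSum
        show c * (d (i + N + 1) * _) ≤ ((i + N + 1 : ℕ) : ℝ) * ρ (i + N + 1) * _
        rw [← mul_assoc]
        exact mul_le_mul_of_nonneg_right (hN _ (by omega)) (equilibriumProd_nonneg hx hdnn _)
    _ ≤ ∑' i, equilibriumTerm ρ d x i :=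
        tsum_comp_le_tsum_of_inj hS (equilibriumTerm_nonneg hx hρ hdnn) (add_left_injective N)

theorem eventually_mul_le_of_tendsto_div_zero {α : Type*} {l : Filter α} {u v : α → ℝ}
    (h : Tendsto (fun i => u i / v i) l (𝓝 0)) (hv : ∀ᶠ i in l, 0 < v i) {c : ℝ} (hc : 0 < c) :
    ∀ᶠ i in l, c * u i ≤ v i := by
  filter_upwards [h.eventually (eventually_lt_nhds (inv_pos.2 hc)), hv] with i hi hvi
  rw [div_lt_iff₀ hvi] at hi
  have := mul_lt_mul_of_pos_left hi hc
  rw [← mul_assoc, mul_inv_cancel₀ hc.ne', one_mul] at this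
  exact this.le

theorem tendsto_equilibriumFun_atTop {d₀ : ℝ} (hρ : ∀ i, 1 ≤ i → 0 < ρ i) (hδ : 0 < δ)
    (hd : ∀ j, 1 ≤ j → δ ≤ d j) (hρd : ∀ i, 1 ≤ i → ρ i ≤ d i)
    (h : Tendsto (fun i : ℕ => d i / ((i : ℝ) * ρ i)) atTop (𝓝 0)) :
    Tendsto (equilibriumFun d₀ ρ d) atTop atTop := by
  refine tendsto_atTop.2 fun K => ?_
  set C := max K 1
  have hC : 0 < C := lt_of_lt_of_le one_pos (le_max_right K 1)
  have hpos : ∀ᶠ i : ℕ in atTop, 0 < (i : ℝ) * ρ i := by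
    filter_upwards [eventually_ge_atTop 1] with i hi
    exact mul_pos (Nat.cast_pos.2 hi) (hρ i hi)
  obtain ⟨N, hN⟩ :=
    eventually_atTop.1 (eventually_mul_le_of_tendsto_div_zero h hpos (mul_pos two_pos hC))
  have hlim : Tendsto (fun x => x / (x + d₀) * equilibriumProd d x N) atTop (𝓝 1) := by
    simpa using (tendsto_div_add_const_atTop d₀).mul (tendsto_equilibriumProd_atTop d N)
  filter_upwards [hlim.eventually (lt_mem_nhds one_half_lt_one), eventually_gt_atTop |d₀|]
    with x hhalf hx
  have hx0 : 0 ≤ x := (abs_nonneg d₀).trans hx.le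
  have hxd₀ : 0 < x + d₀ := by linarith [neg_abs_le d₀]
  have hlow := mul_equilibriumProd_le_tsum hx0 (fun i hi => (hρ i hi).le) hδ hd hρd
    (fun i hi => hN i hi.le)
  calc K ≤ C := le_max_left K 1
    _ ≤ 2 * C * (x / (x + d₀) * equilibriumProd d x N) := by nlinarith
    _ = 1 / (x + d₀) * (2 * C * (x * equilibriumProd d x N)) := by ring
    _ ≤ equilibriumFun d₀ ρ d x := by
        unfold equilibriumFun
        gcongr

end

/-- If `d_i = o(i·ρ_i)` as `i → ∞`, then the silicosis equilibrium function
`F(x) = (1/(x+d₀))·∑_{i=1}^∞ i·ρ_i·∏_{j=1}^i x/(x+d_j)` tends to `∞` as `x → ∞`, and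
consequently every value `c > 0` is attained at some `x > 0`. -/
theorem silicosis_equilibrium_exists_all (d ρ : ℕ → ℝ)
    (hρ : ∀ i : ℕ, 1 ≤ i → 0 < ρ i) (hρd : ∀ i : ℕ, 1 ≤ i → ρ i ≤ d i)
    (hz : 0 < ⨅ i : ℕ, d (i + 1)) (d₀ : ℝ) (hd₀ : 0 < d₀)
    (F : ℝ → ℝ)
    (hF : ∀ x : ℝ, F x = (1 / (x + d₀)) *
      ∑' i : ℕ, ((i + 1 : ℕ) : ℝ) * ρ (i + 1) * ∏ j ∈ Finset.Icc 1 (i + 1), x / (x + d j))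
    (h : Tendsto (fun i : ℕ => d i / ((i : ℝ) * ρ i)) atTop (nhds 0)) :
    Tendsto F atTop atTop ∧ ∀ c : ℝ, 0 < c → ∃ x : ℝ, 0 < x ∧ F x = c := by
  have hd : ∀ j, 1 ≤ j → ⨅ i, d (i + 1) ≤ d j := fun j hj => ciInf_succ_le_of_pos hz hj
  have hρ' : ∀ i, 1 ≤ i → 0 ≤ ρ i := fun i hi => (hρ i hi).le
  obtain rfl : F = equilibriumFun d₀ ρ d := funext hF
  have htop := tendsto_equilibriumFun_atTop (d₀ := d₀) hρ hz hd hρd h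
  refine ⟨htop, fun c hc => ?_⟩
  have hc0 : equilibriumFun d₀ ρ d 0 ≤ c := (equilibriumFun_zero d₀ ρ d).symm ▸ hc.le
  obtain ⟨x, hx, hFx⟩ :=
    intermediate_value_Ici (continuousOn_equilibriumFun hd₀ hρ' hz hd hρd) htop hc0
  refine ⟨x, lt_of_le_of_ne hx ?_, hFx⟩
  rintro rfl
  exact hc.ne' (hFx.symm.trans (equilibriumFun_zero d₀ ρ d))
end

section
/- Let (d_i)_{i≥1} and (ρ_i)_{i≥1} be sequences of positive reals with 0 < ρ_i ≤ d_i for all i ≥ 1 and inf_{i≥1} d_i > 0, let d_0 > 0, and define F(x) := (1/(x+d_0))·∑_{i=1}^∞ i·ρ_i·∏_{j=1}^i x/(x+d_j) for x ≥ 0. If i·ρ_i/d_i → 0 as i → ∞, then F(x) → 0 as x → ∞; moreover F attains a maximum m > 0 on [0,∞), for every c with 0 < c ≤ m there exists x > 0 with F(x) = c, and for every c > m there is no x ≥ 0 with F(x) = c. -/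
/-!
Write `a_i = i ρ_i` and `P_n(x) = ∏_{j=1}^n x/(x+d_j)`. The identity
`d_{n+1} P_{n+1}(x) = x (P_n(x) - P_{n+1}(x))` makes any tail of `∑ a_i P_i(x)` on which
`a_i ≤ ε d_i` telescope to at most `ε x`. After division by `x + d₀` the partial sums therefore
converge to `F` uniformly on `[0, ∞)`; each partial sum is continuous and tends to `0` at infinity,
hence so does `F`. As `F` vanishes at `0` and is positive
on `(0, ∞)`, it attains its maximum `m` at some `x_m > 0`, and the intermediate value theorem on
`[x_m, ∞)` yields every value in `(0, m]`.
-/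

open Filter Topology Finset

theorem ContinuousOn.exists_isMaxOn_Ici_of_tendsto {α β : Type*}
    [ConditionallyCompleteLinearOrder α] [TopologicalSpace α] [OrderTopology α]
    [NoMaxOrder α] [NoMinOrder α] [LinearOrder β] [TopologicalSpace β] [OrderTopology β]
    {f : α → β} {a x₀ : α} {l : β} (hf : ContinuousOn f (Set.Ici a))
    (hlim : Tendsto f atTop (𝓝 l)) (hx₀ : a ≤ x₀) (hl : l < f x₀) :
    ∃ x, a ≤ x ∧ IsMaxOn f (Set.Ici a) x := by
  refine hf.exists_isMaxOn' isClosed_Ici hx₀ ?_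
  rw [cocompact_eq_atBot_atTop, inf_sup_right, (disjoint_atBot_principal_Ici a).eq_bot,
    bot_sup_eq]
  exact (hlim.eventually (ge_mem_nhds hl)).filter_mono inf_le_left

theorem tendsto_one_div_add_atTop (c : ℝ) : Tendsto (fun x : ℝ => 1 / (x + c)) atTop (𝓝 0) :=
  tendsto_const_nhds.div_atTop (tendsto_atTop_add_const_right _ c tendsto_id)

namespace Silicosis

noncomputable def ratioProd (d : ℕ → ℝ) (x : ℝ) (n : ℕ) : ℝ :=
  ∏ j ∈ Icc 1 n, x / (x + d j)

noncomputable def ratioTerm (a d : ℕ → ℝ) (x : ℝ) (i : ℕ) : ℝ :=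
  a (i + 1) * ratioProd d x (i + 1)

noncomputable def equilibriumFun (a d : ℕ → ℝ) (d₀ x : ℝ) : ℝ :=
  1 / (x + d₀) * ∑' i, ratioTerm a d x i

variable {a d : ℕ → ℝ} {d₀ x : ℝ}

theorem ratioProd_succ (n : ℕ) :
    ratioProd d x (n + 1) = ratioProd d x n * (x / (x + d (n + 1))) :=
  prod_Icc_succ_top (Nat.le_add_left 1 n) _

theorem ratioProd_zero_left (n : ℕ) : ratioProd d 0 (n + 1) = 0 := by
  simp [ratioProd_succ]

theorem add_pos_of_mem_Icc (hd : ∀ j, 1 ≤ j → 0 < d j) (hx : 0 ≤ x) {j n : ℕ}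
    (hj : j ∈ Icc 1 n) : 0 < x + d j :=
  add_pos_of_nonneg_of_pos hx (hd j (mem_Icc.1 hj).1)

theorem ratioProd_nonneg (hd : ∀ j, 1 ≤ j → 0 < d j) (hx : 0 ≤ x) (n : ℕ) :
    0 ≤ ratioProd d x n :=
  prod_nonneg fun _ hj => div_nonneg hx (add_pos_of_mem_Icc hd hx hj).le

theorem ratioProd_pos (hd : ∀ j, 1 ≤ j → 0 < d j) (hx : 0 < x) (n : ℕ) :
    0 < ratioProd d x n :=
  prod_pos fun _ hj => div_pos hx (add_pos_of_mem_Icc hd hx.le hj)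

theorem ratioProd_le_one (hd : ∀ j, 1 ≤ j → 0 < d j) (hx : 0 ≤ x) (n : ℕ) :
    ratioProd d x n ≤ 1 :=
  prod_le_one (fun _ hj => div_nonneg hx (add_pos_of_mem_Icc hd hx hj).le) fun j hj =>
    div_le_one_of_le₀ (le_add_of_nonneg_right (hd j (mem_Icc.1 hj).1).le)
      (add_pos_of_mem_Icc hd hx hj).le

theorem mul_ratioProd_succ (hd : ∀ j, 1 ≤ j → 0 < d j) (hx : 0 ≤ x) (n : ℕ) :
    d (n + 1) * ratioProd d x (n + 1) = x * (ratioProd d x n - ratioProd d x (n + 1)) := by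
  have : x + d (n + 1) ≠ 0 := by linarith [hd (n + 1) (Nat.le_add_left 1 n)]
  rw [ratioProd_succ]
  field_simp
  ring

theorem ratioTerm_nonneg (ha : ∀ i, 1 ≤ i → 0 ≤ a i) (hd : ∀ j, 1 ≤ j → 0 < d j) (hx : 0 ≤ x)
    (i : ℕ) : 0 ≤ ratioTerm a d x i :=
  mul_nonneg (ha _ (Nat.le_add_left 1 i)) (ratioProd_nonneg hd hx _)

theorem ratioTerm_le (ha : ∀ i, 1 ≤ i → 0 ≤ a i) (hd : ∀ j, 1 ≤ j → 0 < d j) (hx : 0 ≤ x)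
    (i : ℕ) : ratioTerm a d x i ≤ a (i + 1) :=
  mul_le_of_le_one_right (ha _ (Nat.le_add_left 1 i)) (ratioProd_le_one hd hx _)

theorem sum_range_ratioTerm_add_le (hd : ∀ j, 1 ≤ j → 0 < d j) (hx : 0 ≤ x) {E : ℝ}
    (hE : 0 ≤ E) {N : ℕ} (hN : ∀ i, N < i → a i ≤ E * d i) (n : ℕ) :
    ∑ i ∈ range n, ratioTerm a d x (i + N) ≤ E * x := by
  set P := fun i => ratioProd d x (i + N)
  calc ∑ i ∈ range n, ratioTerm a d x (i + N)
      ≤ ∑ i ∈ range n, E * x * (P i - P (i + 1)) := by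
        gcongr with i
        have hP : P (i + 1) = ratioProd d x (i + N + 1) := by simp only [P, Nat.add_right_comm]
        rw [hP, mul_assoc, ← mul_ratioProd_succ hd hx, ← mul_assoc]
        exact mul_le_mul_of_nonneg_right (hN _ (by omega)) (ratioProd_nonneg hd hx _)
    _ = E * x * (P 0 - P n) := by rw [← mul_sum, sum_range_sub']
    _ ≤ E * x := by
        have h₀ : P 0 ≤ 1 := ratioProd_le_one hd hx _
        have hn : 0 ≤ P n := ratioProd_nonneg hd hx _
        nlinarith [mul_nonneg hE hx]

theorem tsum_ratioTerm_add_le (ha : ∀ i, 1 ≤ i → 0 ≤ a i) (hd : ∀ j, 1 ≤ j → 0 < d j)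
    (hx : 0 ≤ x) {E : ℝ} (hE : 0 ≤ E) {N : ℕ} (hN : ∀ i, N < i → a i ≤ E * d i) :
    ∑' i, ratioTerm a d x (i + N) ≤ E * x :=
  Real.tsum_le_of_sum_range_le (fun _ => ratioTerm_nonneg ha hd hx _)
    (sum_range_ratioTerm_add_le hd hx hE hN)

theorem eventually_le_mul_of_tendsto_div (hd : ∀ j, 1 ≤ j → 0 < d j)
    (had : Tendsto (fun i => a i / d i) atTop (𝓝 0)) {ε : ℝ} (hε : 0 < ε) :
    ∀ᶠ N in atTop, ∀ i, N < i → a i ≤ ε * d i := by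
  obtain ⟨N₀, hN₀⟩ := eventually_atTop.1 (had.eventually (ge_mem_nhds hε))
  refine eventually_atTop.2 ⟨N₀, fun N hN i hi => ?_⟩
  have := hN₀ i (by omega)
  rwa [div_le_iff₀ (hd i (by omega))] at this

theorem summable_ratioTerm (ha : ∀ i, 1 ≤ i → 0 ≤ a i) (hd : ∀ j, 1 ≤ j → 0 < d j)
    (had : Tendsto (fun i => a i / d i) atTop (𝓝 0)) (hx : 0 ≤ x) :
    Summable (ratioTerm a d x) := by
  obtain ⟨N, hN⟩ := (eventually_le_mul_of_tendsto_div hd had one_pos).exists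
  exact (summable_nat_add_iff N).1 <| summable_of_sum_range_le
    (fun _ => ratioTerm_nonneg ha hd hx _) (sum_range_ratioTerm_add_le hd hx zero_le_one hN)

theorem continuousOn_ratioTerm (hd : ∀ j, 1 ≤ j → 0 < d j) (i : ℕ) :
    ContinuousOn (fun x => ratioTerm a d x i) (Set.Ici 0) :=
  continuousOn_const.mul <| continuousOn_finsetProd _ fun _ hj =>
    continuousOn_id.div (continuousOn_id.add continuousOn_const) fun _ hx =>
      (add_pos_of_mem_Icc hd hx hj).ne'

theorem tendstoUniformlyOn_equilibriumFun (ha : ∀ i, 1 ≤ i → 0 ≤ a i)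
    (hd : ∀ j, 1 ≤ j → 0 < d j) (had : Tendsto (fun i => a i / d i) atTop (𝓝 0))
    (hd₀ : 0 < d₀) :
    TendstoUniformlyOn (fun N x => 1 / (x + d₀) * ∑ i ∈ range N, ratioTerm a d x i)
      (equilibriumFun a d d₀) atTop (Set.Ici 0) := by
  rw [Metric.tendstoUniformlyOn_iff]
  intro ε hε
  filter_upwards [eventually_le_mul_of_tendsto_div hd had (half_pos hε)] with N hN x (hx : 0 ≤ x)
  have hx₀ : 0 < x + d₀ := by linarith
  have htail := tsum_ratioTerm_add_le ha hd hx (half_pos hε).le hN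
  have htail₀ : 0 ≤ ∑' i, ratioTerm a d x (i + N) :=
    tsum_nonneg fun i => ratioTerm_nonneg ha hd hx (i + N)
  rw [equilibriumFun, ← (summable_ratioTerm ha hd had hx).sum_add_tsum_nat_add N, dist_eq_norm,
    ← mul_sub, add_sub_cancel_left, Real.norm_of_nonneg (by positivity)]
  calc 1 / (x + d₀) * ∑' i, ratioTerm a d x (i + N) ≤ 1 / (x + d₀) * (ε / 2 * (x + d₀)) := by
        gcongr
        exact htail.trans (mul_le_mul_of_nonneg_left (by linarith) (half_pos hε).le)
    _ < ε := by field_simp; linarith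

theorem continuousOn_equilibriumFun (ha : ∀ i, 1 ≤ i → 0 ≤ a i)
    (hd : ∀ j, 1 ≤ j → 0 < d j) (had : Tendsto (fun i => a i / d i) atTop (𝓝 0))
    (hd₀ : 0 < d₀) : ContinuousOn (equilibriumFun a d d₀) (Set.Ici 0) :=
  (tendstoUniformlyOn_equilibriumFun ha hd had hd₀).continuousOn <| Frequently.of_forall fun _ =>
    (continuousOn_const.div (continuousOn_id.add continuousOn_const) fun _ hx =>
      (add_pos_of_nonneg_of_pos hx hd₀).ne').mul
        (continuousOn_finsetSum _ fun i _ => continuousOn_ratioTerm hd i)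

theorem tendsto_equilibriumFun (ha : ∀ i, 1 ≤ i → 0 ≤ a i)
    (hd : ∀ j, 1 ≤ j → 0 < d j) (had : Tendsto (fun i => a i / d i) atTop (𝓝 0))
    (hd₀ : 0 < d₀) : Tendsto (equilibriumFun a d d₀) atTop (𝓝 0) := by
  have hpartial (N : ℕ) :
      Tendsto (fun x => 1 / (x + d₀) * ∑ i ∈ range N, ratioTerm a d x i) atTop (𝓝 0) := by
    refine (tendsto_one_div_add_atTop d₀).zero_mul_isBoundedUnder_le <|
      isBoundedUnder_of_eventually_le (a := ∑ i ∈ range N, a (i + 1)) ?_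
    filter_upwards [eventually_ge_atTop 0] with x hx
    rw [Function.comp_apply,
      Real.norm_of_nonneg (sum_nonneg fun i _ => ratioTerm_nonneg ha hd hx i)]
    exact sum_le_sum fun i _ => ratioTerm_le ha hd hx i
  exact ((tendstoUniformlyOn_equilibriumFun ha hd had hd₀).tendstoUniformlyOnFilter.mono_right
    (le_principal_iff.2 (Ici_mem_atTop 0))).tendsto_of_eventually_tendsto
    (Eventually.of_forall hpartial) tendsto_const_nhds

theorem equilibriumFun_zero : equilibriumFun a d d₀ 0 = 0 := by
  simp [equilibriumFun, ratioTerm, ratioProd_zero_left]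

theorem equilibriumFun_pos (ha : ∀ i, 1 ≤ i → 0 ≤ a i) (ha₁ : 0 < a 1)
    (hd : ∀ j, 1 ≤ j → 0 < d j) (had : Tendsto (fun i => a i / d i) atTop (𝓝 0))
    (hd₀ : 0 < d₀) (hx : 0 < x) : 0 < equilibriumFun a d d₀ x := by
  have hx₀ : 0 < x + d₀ := by linarith
  refine mul_pos (by positivity) <| (summable_ratioTerm ha hd had hx.le).tsum_pos
    (ratioTerm_nonneg ha hd hx.le) 0 (mul_pos ha₁ (ratioProd_pos hd hx 1))

end Silicosis

open Silicosis in
theorem silicosis_equilibrium_max_attained_case_general (d ρ : ℕ → ℝ)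
    (hρ : ∀ i : ℕ, 1 ≤ i → 0 < ρ i) (hρd : ∀ i : ℕ, 1 ≤ i → ρ i ≤ d i)
    (d₀ : ℝ) (hd₀ : 0 < d₀)
    (F : ℝ → ℝ)
    (hF : ∀ x : ℝ, F x = (1 / (x + d₀)) *
      ∑' i : ℕ, ((i + 1 : ℕ) : ℝ) * ρ (i + 1) * ∏ j ∈ Finset.Icc 1 (i + 1), x / (x + d j))
    (h : Tendsto (fun i : ℕ => (i : ℝ) * ρ i / d i) atTop (nhds 0)) :
    Tendsto F atTop (nhds 0) ∧
      ∃ m : ℝ, 0 < m ∧ IsGreatest (F '' Set.Ici 0) m ∧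
        (∀ c : ℝ, 0 < c → c ≤ m → ∃ x : ℝ, 0 < x ∧ F x = c) ∧
        (∀ c : ℝ, m < c → ¬ ∃ x : ℝ, 0 ≤ x ∧ F x = c) := by
  have hd : ∀ j, 1 ≤ j → 0 < d j := fun j hj => (hρ j hj).trans_le (hρd j hj)
  have ha : ∀ i : ℕ, 1 ≤ i → 0 ≤ (i : ℝ) * ρ i := fun i hi => by
    have := hρ i hi
    positivity
  have hF' : F = equilibriumFun (fun i => (i : ℝ) * ρ i) d d₀ := funext hF
  have hcont : ContinuousOn F (Set.Ici 0) := hF' ▸ continuousOn_equilibriumFun ha hd h hd₀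
  have hlim : Tendsto F atTop (𝓝 0) := hF' ▸ tendsto_equilibriumFun ha hd h hd₀
  have hF₀ : F 0 = 0 := hF' ▸ equilibriumFun_zero
  have hF₁ : 0 < F 1 :=
    hF' ▸ equilibriumFun_pos ha (by simpa using hρ 1 le_rfl) hd h hd₀ one_pos
  obtain ⟨xm, hxm, hmax⟩ := hcont.exists_isMaxOn_Ici_of_tendsto hlim zero_le_one hF₁
  have hm : 0 < F xm := hF₁.trans_le (hmax (Set.mem_Ici.2 zero_le_one))
  have hxm₀ : 0 < xm := hxm.lt_of_ne (by rintro rfl; simp [hF₀] at hm)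
  have hgreat : IsGreatest (F '' Set.Ici 0) (F xm) :=
    ⟨Set.mem_image_of_mem F hxm, Set.forall_mem_image.2 hmax⟩
  refine ⟨hlim, F xm, hm, hgreat, fun c hc hcm => ?_, fun c hc ⟨x, hx, hFx⟩ => ?_⟩
  · obtain ⟨x, hx, rfl⟩ := isPreconnected_Ici.intermediate_value_Ioc le_rfl
      (le_principal_iff.2 (Ici_mem_atTop xm)) (hcont.mono (Set.Ici_subset_Ici.2 hxm)) hlim
      ⟨hc, hcm⟩
    exact ⟨x, hxm₀.trans_le hx, rfl⟩
  · exact hc.not_ge (hgreat.2 ⟨x, hx, hFx⟩)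

/-- If `i·ρ_i = o(d_i)` as `i → ∞`, then the silicosis equilibrium function
`F(x) = (1/(x+d₀))·∑_{i=1}^∞ i·ρ_i·∏_{j=1}^i x/(x+d_j)` tends to `0` as `x → ∞`;
moreover `F` attains a maximum `m > 0` on `[0,∞)`, every `c` with `0 < c ≤ m` is
attained at some `x > 0`, and no `c > m` is attained at any `x ≥ 0`. -/
theorem silicosis_equilibrium_max_attained_case (d ρ : ℕ → ℝ)
    (hρ : ∀ i : ℕ, 1 ≤ i → 0 < ρ i) (hρd : ∀ i : ℕ, 1 ≤ i → ρ i ≤ d i)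
    (hz : 0 < ⨅ i : ℕ, d (i + 1)) (d₀ : ℝ) (hd₀ : 0 < d₀)
    (F : ℝ → ℝ)
    (hF : ∀ x : ℝ, F x = (1 / (x + d₀)) *
      ∑' i : ℕ, ((i + 1 : ℕ) : ℝ) * ρ (i + 1) * ∏ j ∈ Finset.Icc 1 (i + 1), x / (x + d j))
    (h : Tendsto (fun i : ℕ => (i : ℝ) * ρ i / d i) atTop (nhds 0)) :
    Tendsto F atTop (nhds 0) ∧
      ∃ m : ℝ, 0 < m ∧ IsGreatest (F '' Set.Ici 0) m ∧
        (∀ c : ℝ, 0 < c → c ≤ m → ∃ x : ℝ, 0 < x ∧ F x = c) ∧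
        (∀ c : ℝ, m < c → ¬ ∃ x : ℝ, 0 ≤ x ∧ F x = c) :=
  silicosis_equilibrium_max_attained_case_general d ρ hρ hρd d₀ hd₀ F hF h
end
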